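/- The rate function boundary limit: for i.i.d. variables X_l taking value log C_i with probability p_i > 0 (C_i positive integers, not all equal), the Cramér rate function I(λ') = sup_θ [θλ' − log ∑_i p_i C_i^θ] satisfies I(λ') → −log(∑_{i : C_i = C_max} p_i) as λ' ↗ log C_max. -/

import Mathlib

/-!
Write `Λ(θ) = log ∑ pᵢ Cᵢ^θ`, `L = log C_max` and `q` for the mass of the maximisers.
Bounding `Λ(θ) ≥ log q + θ L` for `θ ≥ 0` (keep only the maximal terms) and `Λ(θ) ≥ θ μ` for
`θ ≤ 0` (Jensen, `μ` the mean of `log C`) shows `θ λ - Λ(θ) ≤ -log q` whenever `μ ≤ λ ≤ L`.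
Conversely `θ L - Λ(θ) = -log ∑ pᵢ (Cᵢ / C_max)^θ → -log q` as `θ → ∞`, and each single
`θ λ - Λ(θ)` is continuous in `λ`, so the supremum cannot stay below `-log q` as `λ ↗ L`.
-/

open Filter Finset Set Topology

theorem tendsto_ciSup_mul_sub_nhdsLT {Λ : ℝ → ℝ} {a L S : ℝ} (haL : a < L)
    (hle : ∀ lam ∈ Ioo a L, ∀ θ, θ * lam - Λ θ ≤ S)
    (hlim : Tendsto (fun θ => θ * L - Λ θ) atTop (𝓝 S)) :
    Tendsto (fun lam => ⨆ θ, θ * lam - Λ θ) (𝓝[<] L) (𝓝 S) := by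
  have hIoo : ∀ᶠ lam in 𝓝[<] L, lam ∈ Ioo a L := Ioo_mem_nhdsLT haL
  refine tendsto_order.2 ⟨fun S' hS' => ?_, fun S' hS' => ?_⟩
  · obtain ⟨θ₀, hθ₀⟩ := (hlim.eventually (eventually_gt_nhds hS')).exists
    have hcont : Tendsto (fun lam => θ₀ * lam - Λ θ₀) (𝓝[<] L) (𝓝 (θ₀ * L - Λ θ₀)) :=
      ((continuous_const_mul θ₀).sub continuous_const).continuousAt.tendsto.mono_left
        nhdsWithin_le_nhds
    filter_upwards [hIoo, hcont.eventually (eventually_gt_nhds hθ₀)] with lam hlam hgt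
    exact hgt.trans_le (le_ciSup ⟨S, forall_mem_range.2 (hle lam hlam)⟩ θ₀)
  · filter_upwards [hIoo] with lam hlam
    exact (ciSup_le (hle lam hlam)).trans_lt hS'

section WeightedPowerSums

variable {ι : Type*} [Fintype ι] {p x : ι → ℝ} {M : ℝ}

theorem mul_sum_mul_log_le_log_sum_mul_rpow (hp : ∀ i, 0 ≤ p i) (hsum : ∑ i, p i = 1)
    (hx : ∀ i, 0 < x i) (θ : ℝ) :
    θ * ∑ i, p i * Real.log (x i) ≤ Real.log (∑ i, p i * x i ^ θ) := by
  have hJensen := strictConcaveOn_log_Ioi.concaveOn.le_map_sum (t := univ) (w := p)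
    (p := fun i => x i ^ θ) (fun i _ => hp i) hsum fun i _ => Real.rpow_pos_of_pos (hx i) θ
  simp only [smul_eq_mul, Real.log_rpow (hx _)] at hJensen
  rw [mul_sum]
  exact (sum_congr rfl fun i _ => by ring).trans_le hJensen

theorem sum_mul_log_lt_log (hp : ∀ i, 0 < p i) (hsum : ∑ i, p i = 1) (hx : ∀ i, 0 < x i)
    (hM : ∀ i, x i ≤ M) (hlt : ∃ j, x j < M) :
    ∑ i, p i * Real.log (x i) < Real.log M := by
  obtain ⟨j, hj⟩ := hlt
  calc ∑ i, p i * Real.log (x i) < ∑ i, p i * Real.log M :=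
        sum_lt_sum (fun i _ => mul_le_mul_of_nonneg_left
          (Real.log_le_log (hx i) (hM i)) (hp i).le)
          ⟨j, mem_univ j, mul_lt_mul_of_pos_left (Real.log_lt_log (hx j) hj) (hp j)⟩
    _ = Real.log M := by rw [← sum_mul, hsum, one_mul]

theorem sum_filter_eq_mul_rpow_le_sum_mul_rpow (hp : ∀ i, 0 ≤ p i) (hx : ∀ i, 0 < x i)
    (θ : ℝ) :
    (∑ i ∈ univ.filter (fun i => x i = M), p i) * M ^ θ ≤ ∑ i, p i * x i ^ θ := by
  rw [sum_mul]
  calc ∑ i ∈ univ.filter (fun i => x i = M), p i * M ^ θ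
      = ∑ i ∈ univ.filter (fun i => x i = M), p i * x i ^ θ :=
        sum_congr rfl fun i hi => by rw [(mem_filter.1 hi).2]
    _ ≤ ∑ i, p i * x i ^ θ := sum_le_sum_of_subset_of_nonneg (filter_subset _ _)
        fun i _ _ => mul_nonneg (hp i) (Real.rpow_pos_of_pos (hx i) θ).le

theorem mul_sub_log_sum_mul_rpow_le (hp : ∀ i, 0 ≤ p i) (hsum : ∑ i, p i = 1)
    (hx : ∀ i, 0 < x i) (hq : 0 < ∑ i ∈ univ.filter (fun i => x i = M), p i)
    {lam : ℝ} (hμ : ∑ i, p i * Real.log (x i) ≤ lam) (hL : lam ≤ Real.log M) (θ : ℝ) :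
    θ * lam - Real.log (∑ i, p i * x i ^ θ)
      ≤ -Real.log (∑ i ∈ univ.filter (fun i => x i = M), p i) := by
  set q := ∑ i ∈ univ.filter (fun i => x i = M), p i
  rcases le_or_gt 0 θ with hθ | hθ
  · obtain ⟨i, hi⟩ := Finset.nonempty_of_sum_ne_zero hq.ne'
    have hMpos : 0 < M := (mem_filter.1 hi).2 ▸ hx i
    have hmax : Real.log q + θ * Real.log M ≤ Real.log (∑ i, p i * x i ^ θ) := by
      rw [← Real.log_rpow hMpos, ← Real.log_mul hq.ne' (Real.rpow_pos_of_pos hMpos θ).ne']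
      exact Real.log_le_log (mul_pos hq (Real.rpow_pos_of_pos hMpos θ))
        (sum_filter_eq_mul_rpow_le_sum_mul_rpow hp hx θ)
    have := mul_le_mul_of_nonneg_left hL hθ
    linarith
  · have hJensen := mul_sum_mul_log_le_log_sum_mul_rpow hp hsum hx θ
    have := mul_le_mul_of_nonpos_left hμ hθ.le
    have hq_le : q ≤ 1 := hsum ▸ sum_le_sum_of_subset_of_nonneg (filter_subset _ _)
      fun i _ _ => hp i
    linarith [Real.log_nonpos hq.le hq_le]

theorem tendsto_log_sum_mul_rpow_sub_mul_log (hp : ∀ i, 0 < p i) (hx : ∀ i, 0 < x i)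
    (hM : ∀ i, x i ≤ M) (hattained : ∃ i, x i = M) :
    Tendsto (fun θ : ℝ => Real.log (∑ i, p i * x i ^ θ) - θ * Real.log M) atTop
      (𝓝 (Real.log (∑ i ∈ univ.filter (fun i => x i = M), p i))) := by
  obtain ⟨i₀, hi₀⟩ := hattained
  have hMpos : 0 < M := hi₀ ▸ hx i₀
  have hq : 0 < ∑ i ∈ univ.filter (fun i => x i = M), p i :=
    sum_pos (fun i _ => hp i) ⟨i₀, mem_filter.2 ⟨mem_univ i₀, hi₀⟩⟩
  have hratio : Tendsto (fun θ : ℝ => ∑ i, p i * (x i / M) ^ θ) atTop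
      (𝓝 (∑ i ∈ univ.filter (fun i => x i = M), p i)) := by
    rw [sum_filter]
    refine tendsto_finsetSum _ fun i _ => ?_
    by_cases hi : x i = M
    · simp only [hi, div_self hMpos.ne', Real.one_rpow, mul_one, if_true]
      exact tendsto_const_nhds
    · have hlt : x i / M < 1 := (div_lt_one hMpos).2 ((hM i).lt_of_ne hi)
      have := (tendsto_rpow_atTop_of_base_lt_one _
        (by linarith [div_pos (hx i) hMpos]) hlt).const_mul (p i)
      rw [mul_zero] at this
      simpa only [hi, if_false] using this
  refine ((Real.continuousAt_log hq.ne').tendsto.comp hratio).congr fun θ => ?_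
  have hsum_div : ∑ i, p i * (x i / M) ^ θ = (∑ i, p i * x i ^ θ) / M ^ θ := by
    rw [sum_div]
    exact sum_congr rfl fun i _ => by
      rw [Real.div_rpow (hx i).le hMpos.le, mul_div_assoc]
  have hpos : 0 < ∑ i, p i * x i ^ θ :=
    sum_pos (fun i _ => mul_pos (hp i) (Real.rpow_pos_of_pos (hx i) θ)) ⟨i₀, mem_univ i₀⟩
  simp only [Function.comp_apply, hsum_div]
  rw [Real.log_div hpos.ne' (Real.rpow_pos_of_pos hMpos θ).ne', Real.log_rpow hMpos]

end WeightedPowerSums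

/-- Right boundary limit of the rate function: `I(λ') → -log(∑_{i : C_i = C_max} p_i)`
as `λ' ↗ log C_max`. -/
theorem stmt14 {ι : Type*} [Fintype ι] [Nonempty ι]
    (C : ι → ℕ) (hC : ∀ i, 0 < C i) (hne : ∃ i j, C i ≠ C j)
    (p : ι → ℝ) (hp : ∀ i, 0 < p i) (hsum : ∑ i, p i = 1) :
    let Cmax : ℕ := Finset.univ.sup' Finset.univ_nonempty C
    Filter.Tendsto
      (fun lam : ℝ => ⨆ θ : ℝ, (θ * lam - Real.log (∑ i, p i * (C i : ℝ) ^ θ)))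
      (nhdsWithin (Real.log (Cmax : ℝ)) (Set.Iio (Real.log (Cmax : ℝ))))
      (nhds (-Real.log (∑ i ∈ Finset.univ.filter (fun i => C i = Cmax), p i))) := by
  intro Cmax
  have hx : ∀ i, (0 : ℝ) < C i := fun i => Nat.cast_pos.2 (hC i)
  have hM : ∀ i, (C i : ℝ) ≤ Cmax := fun i => Nat.cast_le.2 (le_sup' C (mem_univ i))
  obtain ⟨i₀, -, hi₀⟩ := exists_mem_eq_sup' univ_nonempty C
  have hattained : ∃ i, (C i : ℝ) = Cmax := ⟨i₀, congrArg Nat.cast hi₀.symm⟩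
  have hlt : ∃ j, (C j : ℝ) < Cmax := by
    obtain ⟨a, b, hab⟩ := hne
    by_contra! h
    exact hab (Nat.cast_injective (((hM a).antisymm (h a)).trans ((hM b).antisymm (h b)).symm))
  have hfilter : univ.filter (fun i => C i = Cmax) = univ.filter (fun i => (C i : ℝ) = Cmax) :=
    filter_congr fun i _ => Nat.cast_inj.symm
  have hq : 0 < ∑ i ∈ univ.filter (fun i => (C i : ℝ) = Cmax), p i :=
    hfilter ▸ sum_pos (fun i _ => hp i) ⟨i₀, mem_filter.2 ⟨mem_univ i₀, hi₀.symm⟩⟩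
  rw [hfilter]
  refine tendsto_ciSup_mul_sub_nhdsLT (sum_mul_log_lt_log hp hsum hx hM hlt)
    (fun lam hlam => mul_sub_log_sum_mul_rpow_le (fun i => (hp i).le) hsum hx hq
      hlam.1.le hlam.2.le) ?_
  simpa [neg_sub] using (tendsto_log_sum_mul_rpow_sub_mul_log hp hx hM hattained).neg
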